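/- arXiv:0903.4296 — 4 statements merged into one kernel-verified Lean document; each statement's English description precedes it below -/
import Mathlib

section
/- Let F, G, σ be C¹ on an interval J with F'² < 2σ'G' on J, let s(u,v) denote the second component of the inverse of the diffeomorphism Ψ(u,s) = (u, G(s)u²/2 + F(s)u + σ(s)) (assumed to be injective), and set φ(u,v) = F(s(u,v)) + u G(s(u,v)). Then B_φ(φ) = φ_u + φ φ_v = G(s(u,v)) on Ψ(ℝ × J). -/
/-- Partial derivative in the first variable. -/
noncomputable def pdu (f : ℝ → ℝ → ℝ) (u v : ℝ) : ℝ := deriv (fun x => f x v) u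

/-- Partial derivative in the second variable. -/
noncomputable def pdv (f : ℝ → ℝ → ℝ) (u v : ℝ) : ℝ := deriv (fun y => f u y) v

/-!
Differentiating the identity `Ψ₂(u, s(u,v)) = v`, where `Ψ₂` is the second component of `Ψ`,
in `v` and in `u` gives `∂ₛΨ₂ · s_v = 1` and `∂ᵤΨ₂ + ∂ₛΨ₂ · s_u = 0`. Since `∂ᵤΨ₂ = F(s) + uG(s) = φ`,
this says `s_u + φ s_v = 0`: `s` is constant along the characteristics of `B_φ`. Hence
`B_φ φ = G(s) + (F'(s) + uG'(s)) B_φ s = G(s)`.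
-/

open Filter Topology Set

theorem HasFDerivAt.hasDerivAt_fst_slice {f : ℝ × ℝ → ℝ} {L : ℝ × ℝ →L[ℝ] ℝ} {x y : ℝ}
    (hf : HasFDerivAt f L (x, y)) : HasDerivAt (fun t => f (t, y)) (L (1, 0)) x :=
  hf.comp_hasDerivAt x ((hasDerivAt_id x).prodMk (hasDerivAt_const x y))

theorem HasFDerivAt.hasDerivAt_snd_slice {f : ℝ × ℝ → ℝ} {L : ℝ × ℝ →L[ℝ] ℝ} {x y : ℝ}
    (hf : HasFDerivAt f L (x, y)) : HasDerivAt (fun t => f (x, t)) (L (0, 1)) y :=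
  hf.comp_hasDerivAt y ((hasDerivAt_const y x).prodMk (hasDerivAt_id y))

theorem ContinuousLinearMap.apply_prod_eq (L : ℝ × ℝ →L[ℝ] ℝ) (a b : ℝ) :
    L (a, b) = a * L (1, 0) + b * L (0, 1) := by
  have hab : ((a, b) : ℝ × ℝ) = a • ((1 : ℝ), (0 : ℝ)) + b • ((0 : ℝ), (1 : ℝ)) := by
    ext <;> simp
  rw [hab, map_add, map_smul, map_smul, smul_eq_mul, smul_eq_mul]

/-- With `M (1, 0) = s_u`, `M (0, 1) = s_v` and `L (1, 0) = Φ_u`, this is the transport equation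
`s_u + Φ_u s_v = 0`. -/
theorem transport_of_level {Φ s : ℝ × ℝ → ℝ} {p : ℝ × ℝ} {L M : ℝ × ℝ →L[ℝ] ℝ}
    (hΦ : HasFDerivAt Φ L (p.1, s p)) (hs : HasFDerivAt s M p)
    (hlevel : ∀ᶠ q in 𝓝 p, Φ (q.1, s q) = q.2) :
    M (1, 0) + L (1, 0) * M (0, 1) = 0 := by
  have hcomp : HasFDerivAt (fun q => Φ (q.1, s q))
      (L.comp ((ContinuousLinearMap.fst ℝ ℝ ℝ).prod M)) p :=
    hΦ.comp p (hasFDerivAt_fst.prodMk hs)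
  have hsnd : L.comp ((ContinuousLinearMap.fst ℝ ℝ ℝ).prod M) = ContinuousLinearMap.snd ℝ ℝ ℝ :=
    hcomp.unique (hasFDerivAt_snd.congr_of_eventuallyEq hlevel)
  have hu : L (1, M (1, 0)) = 0 := by simpa using congrArg (· (1, 0)) hsnd
  have hv : L (0, M (0, 1)) = 1 := by simpa using congrArg (· (0, 1)) hsnd
  rw [L.apply_prod_eq] at hu hv
  linear_combination M (0, 1) * hu - M (1, 0) * hv

/-- The second component of `Ψ (u, s) = (u, G(s)u²/2 + F(s)u + σ(s))`. -/
noncomputable def psiSnd (F G σ : ℝ → ℝ) (q : ℝ × ℝ) : ℝ :=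
  G q.2 * q.1 ^ 2 / 2 + F q.2 * q.1 + σ q.2

section PsiSnd

variable {F G σ : ℝ → ℝ}

theorem differentiableAt_psiSnd {u a : ℝ} (hF : DifferentiableAt ℝ F a)
    (hG : DifferentiableAt ℝ G a) (hσ : DifferentiableAt ℝ σ a) :
    DifferentiableAt ℝ (psiSnd F G σ) (u, a) := by
  unfold psiSnd
  fun_prop

theorem fderiv_psiSnd_apply_one_zero {u a : ℝ} (hF : DifferentiableAt ℝ F a)
    (hG : DifferentiableAt ℝ G a) (hσ : DifferentiableAt ℝ σ a) :
    fderiv ℝ (psiSnd F G σ) (u, a) (1, 0) = F a + u * G a := by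
  have hslice : HasDerivAt (fun t => psiSnd F G σ (t, a)) (F a + u * G a) u := by
    refine ((((hasDerivAt_pow 2 u).const_mul (G a)).div_const 2).add
      ((hasDerivAt_id u).const_mul (F a)) |>.add_const (σ a)).congr_deriv ?_
    push_cast
    ring
  exact (differentiableAt_psiSnd hF hG hσ).hasFDerivAt.hasDerivAt_fst_slice.unique hslice

theorem sVal_mem_and_psiSnd_sVal {J : Set ℝ} {Ψ : ℝ × ℝ → ℝ × ℝ} {sVal : ℝ → ℝ → ℝ}
    (hΨ : ∀ p, Ψ p = (p.1, psiSnd F G σ p))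
    (hinv : ∀ u, ∀ s ∈ J, sVal u (psiSnd F G σ (u, s)) = s)
    {q : ℝ × ℝ} (hq : q ∈ Ψ '' (univ ×ˢ J)) :
    sVal q.1 q.2 ∈ J ∧ psiSnd F G σ (q.1, sVal q.1 q.2) = q.2 := by
  obtain ⟨⟨u, s⟩, ⟨-, hs⟩, rfl⟩ := hq
  simpa [hΨ, hinv u s hs] using hs

end PsiSnd

theorem pdu_add_mul_pdv_of_transport {F G : ℝ → ℝ} {sVal φ : ℝ → ℝ → ℝ}
    (hφ : ∀ u v, φ u v = F (sVal u v) + u * G (sVal u v)) {u v F' G' : ℝ}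
    {M : ℝ × ℝ →L[ℝ] ℝ} (hF : HasDerivAt F F' (sVal u v)) (hG : HasDerivAt G G' (sVal u v))
    (hs : HasFDerivAt (fun q : ℝ × ℝ => sVal q.1 q.2) M (u, v))
    (htrans : M (1, 0) + φ u v * M (0, 1) = 0) :
    pdu φ u v + φ u v * pdv φ u v = G (sVal u v) := by
  have hsu : HasDerivAt (fun t => sVal t v) (M (1, 0)) u := hs.hasDerivAt_fst_slice
  have hsv : HasDerivAt (fun t => sVal u t) (M (0, 1)) v := hs.hasDerivAt_snd_slice
  have hφu : HasDerivAt (fun t => φ t v)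
      (F' * M (1, 0) + (G (sVal u v) + u * (G' * M (1, 0)))) u := by
    simp only [hφ]
    exact ((hF.comp u hsu).add ((hasDerivAt_id u).mul (hG.comp u hsu))).congr_deriv (by simp)
  have hφv : HasDerivAt (fun t => φ u t) (F' * M (0, 1) + u * (G' * M (0, 1))) v := by
    simp only [hφ]
    exact (hF.comp v hsv).add ((hG.comp v hsv).const_mul u)
  rw [pdu, pdv, hφu.deriv, hφv.deriv]
  linear_combination (F' + u * G') * htrans

theorem stmt_6_general (J : Set ℝ) (hJopen : IsOpen J)
    (F G σ : ℝ → ℝ)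
    (hF : ContDiffOn ℝ 1 F J) (hG : ContDiffOn ℝ 1 G J) (hσ : ContDiffOn ℝ 1 σ J)
    (Ψ : ℝ × ℝ → ℝ × ℝ)
    (hΨ : ∀ p : ℝ × ℝ, Ψ p = (p.1, G p.2 * p.1 ^ 2 / 2 + F p.2 * p.1 + σ p.2))
    (Ω : Set (ℝ × ℝ)) (hΩ : Ω = Ψ '' (Set.univ ×ˢ J)) (hΩopen : IsOpen Ω)
    (sVal : ℝ → ℝ → ℝ)
    (hinv : ∀ u : ℝ, ∀ s ∈ J, sVal u (G s * u ^ 2 / 2 + F s * u + σ s) = s)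
    (hsC1 : ContDiffOn ℝ 1 (fun p : ℝ × ℝ => sVal p.1 p.2) Ω)
    (φ : ℝ → ℝ → ℝ)
    (hφ : ∀ u v : ℝ, φ u v = F (sVal u v) + u * G (sVal u v)) :
    ∀ p ∈ Ω, pdu φ p.1 p.2 + φ p.1 p.2 * pdv φ p.1 p.2 = G (sVal p.1 p.2) := by
  subst hΩ
  intro p hp
  have hlevel := fun q (hq : q ∈ Ψ '' (univ ×ˢ J)) =>
    sVal_mem_and_psiSnd_sVal (F := F) (G := G) (σ := σ) hΨ hinv hq
  have hdiff : ∀ f : ℝ → ℝ, ContDiffOn ℝ 1 f J → DifferentiableAt ℝ f (sVal p.1 p.2) :=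
    fun f hf => (hf.differentiableOn one_ne_zero).differentiableAt
      (hJopen.mem_nhds (hlevel p hp).1)
  have hs := ((hsC1.differentiableOn one_ne_zero).differentiableAt
    (hΩopen.mem_nhds hp)).hasFDerivAt
  have htrans := transport_of_level
    (differentiableAt_psiSnd (hdiff F hF) (hdiff G hG) (hdiff σ hσ)).hasFDerivAt hs
    (eventually_of_mem (hΩopen.mem_nhds hp) fun q hq => (hlevel q hq).2)
  rw [fderiv_psiSnd_apply_one_zero (hdiff F hF) (hdiff G hG) (hdiff σ hσ), ← hφ] at htrans
  exact pdu_add_mul_pdv_of_transport hφ (hdiff F hF).hasDerivAt (hdiff G hG).hasDerivAt hs htrans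

/-- In the setting of an intrinsic graphical strip, with
`φ(u,v) = F(s(u,v)) + u G(s(u,v))`, one has `B_φ(φ) = φ_u + φ φ_v = G(s(u,v))`
on `Ψ(ℝ × J)`. -/
theorem stmt_6 (J : Set ℝ) (hJopen : IsOpen J) (hJ : J.OrdConnected)
    (F G σ : ℝ → ℝ)
    (hF : ContDiffOn ℝ 1 F J) (hG : ContDiffOn ℝ 1 G J) (hσ : ContDiffOn ℝ 1 σ J)
    (hstrict : ∀ s ∈ J, (deriv F s) ^ 2 < 2 * deriv σ s * deriv G s)
    (Ψ : ℝ × ℝ → ℝ × ℝ)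
    (hΨ : ∀ p : ℝ × ℝ, Ψ p = (p.1, G p.2 * p.1 ^ 2 / 2 + F p.2 * p.1 + σ p.2))
    (hinj : Set.InjOn Ψ (Set.univ ×ˢ J))
    (Ω : Set (ℝ × ℝ)) (hΩ : Ω = Ψ '' (Set.univ ×ˢ J)) (hΩopen : IsOpen Ω)
    (sVal : ℝ → ℝ → ℝ)
    (hinv : ∀ u : ℝ, ∀ s ∈ J, sVal u (G s * u ^ 2 / 2 + F s * u + σ s) = s)
    (hsC1 : ContDiffOn ℝ 1 (fun p : ℝ × ℝ => sVal p.1 p.2) Ω)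
    (φ : ℝ → ℝ → ℝ)
    (hφ : ∀ u v : ℝ, φ u v = F (sVal u v) + u * G (sVal u v)) :
    ∀ p ∈ Ω, pdu φ p.1 p.2 + φ p.1 p.2 * pdv φ p.1 p.2 = G (sVal p.1 p.2) :=
  stmt_6_general J hJopen F G σ hF hG hσ Ψ hΨ Ω hΩ hΩopen sVal hinv hsC1 φ hφ
end

section
/- The function φ defined by an intrinsic graphical strip satisfies the double Burger equation B_φ(B_φ(φ)) = 0; in particular every strict intrinsic graphical strip is a minimal surface. -/
/-- The linearized Burger operator `B_φ(f) = f_u + φ f_v`. -/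
noncomputable def burger (φ f : ℝ → ℝ → ℝ) (u v : ℝ) : ℝ :=
  pdu f u v + φ u v * pdv f u v

/-!
The parameter `s` of the strip is constant along the characteristics of `B_φ`: differentiating
the level identity `v = G(s) u²/2 + F(s) u + σ(s)` in `u` and in `v` gives `B_φ(s) = 0`.
By the chain rule `B_φ(φ) = (F'(s) + u G'(s)) B_φ(s) + G(s) = G(s)` on the open set `Ω`, hence
`B_φ(B_φ(φ)) = G'(s) B_φ(s) = 0`.
-/

open Filter Topology Function

section Burger

variable {φ f g : ℝ → ℝ → ℝ} {u v : ℝ}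

theorem Filter.Eventually.slice_fst {P : ℝ × ℝ → Prop} (h : ∀ᶠ q in 𝓝 (u, v), P q) :
    ∀ᶠ x in 𝓝 u, P (x, v) :=
  ((continuous_id.prodMk continuous_const).tendsto u).eventually h

theorem Filter.Eventually.slice_snd {P : ℝ × ℝ → Prop} (h : ∀ᶠ q in 𝓝 (u, v), P q) :
    ∀ᶠ y in 𝓝 v, P (u, y) :=
  ((continuous_const.prodMk continuous_id).tendsto v).eventually h

theorem DifferentiableAt.hasDerivAt_pdu (hf : DifferentiableAt ℝ (uncurry f) (u, v)) :
    HasDerivAt (fun x => f x v) (pdu f u v) u :=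
  (hf.comp (f := fun x => (x, v)) u
    (differentiableAt_id.prodMk (differentiableAt_const v))).hasDerivAt

theorem DifferentiableAt.hasDerivAt_pdv (hf : DifferentiableAt ℝ (uncurry f) (u, v)) :
    HasDerivAt (fun y => f u y) (pdv f u v) v :=
  (hf.comp (f := fun y => (u, y)) v
    ((differentiableAt_const u).prodMk differentiableAt_id)).hasDerivAt

theorem burger_congr (h : uncurry f =ᶠ[𝓝 (u, v)] uncurry g) :
    burger φ f u v = burger φ g u v := by
  have hu : (fun x => f x v) =ᶠ[𝓝 u] fun x => g x v := h.slice_fst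
  have hv : (fun y => f u y) =ᶠ[𝓝 v] fun y => g u y := h.slice_snd
  rw [burger, burger, pdu, pdu, pdv, pdv, hu.deriv_eq, hv.deriv_eq]

theorem burger_comp {h : ℝ → ℝ} {h' : ℝ} (hh : HasDerivAt h h' (f u v))
    (hf : DifferentiableAt ℝ (uncurry f) (u, v)) :
    burger φ (fun x y => h (f x y)) u v = h' * burger φ f u v := by
  have hu : HasDerivAt (fun x => h (f x v)) (h' * pdu f u v) u := hh.comp u hf.hasDerivAt_pdu
  have hv : HasDerivAt (fun y => h (f u y)) (h' * pdv f u v) v := hh.comp v hf.hasDerivAt_pdv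
  rw [burger, burger, pdu, pdv, hu.deriv, hv.deriv]
  ring

theorem burger_comp_add_mul_comp {F G : ℝ → ℝ} {F' G' : ℝ} (hF : HasDerivAt F F' (f u v))
    (hG : HasDerivAt G G' (f u v)) (hf : DifferentiableAt ℝ (uncurry f) (u, v)) :
    burger φ (fun x y => F (f x y) + x * G (f x y)) u v =
      (F' + u * G') * burger φ f u v + G (f u v) := by
  have hu : HasDerivAt (fun x => F (f x v) + x * G (f x v))
      (F' * pdu f u v + (1 * G (f u v) + u * (G' * pdu f u v))) u :=
    (hF.comp u hf.hasDerivAt_pdu).add ((hasDerivAt_id' u).mul (hG.comp u hf.hasDerivAt_pdu))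
  have hv : HasDerivAt (fun y => F (f u y) + u * G (f u y))
      (F' * pdv f u v + u * (G' * pdv f u v)) v :=
    (hF.comp v hf.hasDerivAt_pdv).add ((hG.comp v hf.hasDerivAt_pdv).const_mul u)
  rw [burger, burger, pdu, pdv, hu.deriv, hv.deriv]
  ring

end Burger

/-- The two differentiated level identities combine linearly into `B_φ(s) = 0`, so no
nondegeneracy of `∂ₛ(G(s) u²/2 + F(s) u + σ(s))` is needed. -/
theorem burger_eq_zero_of_eventually_level {F G σ : ℝ → ℝ} {s : ℝ → ℝ → ℝ} {u v : ℝ}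
    (hlevel : ∀ᶠ q in 𝓝 (u, v),
      q.2 = G (s q.1 q.2) * q.1 ^ 2 / 2 + F (s q.1 q.2) * q.1 + σ (s q.1 q.2))
    (hs : DifferentiableAt ℝ (uncurry s) (u, v)) (hF : DifferentiableAt ℝ F (s u v))
    (hG : DifferentiableAt ℝ G (s u v)) (hσ : DifferentiableAt ℝ σ (s u v)) :
    burger (fun x y => F (s x y) + x * G (s x y)) s u v = 0 := by
  set a := pdu s u v
  set b := pdv s u v
  have hsu := hs.hasDerivAt_pdu
  have hsv := hs.hasDerivAt_pdv
  have hu := (((hG.hasDerivAt.comp u hsu).mul (hasDerivAt_pow 2 u)).div_const 2).add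
    ((hF.hasDerivAt.comp u hsu).mul (hasDerivAt_id' u)) |>.add (hσ.hasDerivAt.comp u hsu)
  have hv := (((hG.hasDerivAt.comp v hsv).mul_const (u ^ 2)).div_const 2).add
    ((hF.hasDerivAt.comp v hsv).mul_const u) |>.add (hσ.hasDerivAt.comp v hsv)
  have level_u : (deriv G (s u v) * a * u ^ 2 + G (s u v) * (2 * u ^ 1)) / 2 +
      (deriv F (s u v) * a * u + F (s u v) * 1) + deriv σ (s u v) * a = 0 :=
    hu.unique <| (hasDerivAt_const u v).congr_of_eventuallyEq <| by
      filter_upwards [hlevel.slice_fst] with x hx using hx.symm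
  have level_v : deriv G (s u v) * b * u ^ 2 / 2 + deriv F (s u v) * b * u +
      deriv σ (s u v) * b = 1 :=
    hv.unique <| (hasDerivAt_id v).congr_of_eventuallyEq <| by
      filter_upwards [hlevel.slice_snd] with y hy using hy.symm
  rw [burger]
  linear_combination b * level_u - a * level_v

theorem stmt_9_general (J : Set ℝ) (hJopen : IsOpen J)
    (F G σ : ℝ → ℝ)
    (hF : ContDiffOn ℝ 2 F J) (hG : ContDiffOn ℝ 2 G J) (hσ : ContDiffOn ℝ 2 σ J)
    (Ψ : ℝ × ℝ → ℝ × ℝ)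
    (hΨ : ∀ p : ℝ × ℝ, Ψ p = (p.1, G p.2 * p.1 ^ 2 / 2 + F p.2 * p.1 + σ p.2))
    (Ω : Set (ℝ × ℝ)) (hΩ : Ω = Ψ '' (Set.univ ×ˢ J)) (hΩopen : IsOpen Ω)
    (sVal : ℝ → ℝ → ℝ)
    (hinv : ∀ u : ℝ, ∀ s ∈ J, sVal u (G s * u ^ 2 / 2 + F s * u + σ s) = s)
    (hsC1 : ContDiffOn ℝ 1 (fun p : ℝ × ℝ => sVal p.1 p.2) Ω)
    (φ : ℝ → ℝ → ℝ)
    (hφ : ∀ u v : ℝ, φ u v = F (sVal u v) + u * G (sVal u v)) :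
    ∀ p ∈ Ω, burger φ (burger φ φ) p.1 p.2 = 0 := by
  obtain rfl : φ = fun u v => F (sVal u v) + u * G (sVal u v) := funext₂ hφ
  have mem : ∀ q ∈ Ω, sVal q.1 q.2 ∈ J ∧
      q.2 = G (sVal q.1 q.2) * q.1 ^ 2 / 2 + F (sVal q.1 q.2) * q.1 + σ (sVal q.1 q.2) := by
    rintro _ hq
    obtain ⟨⟨u, s⟩, ⟨-, hs⟩, rfl⟩ := hΩ ▸ hq
    simp only [hΨ, hinv u s hs, and_true]
    exact hs
  have diff {H : ℝ → ℝ} (hH : ContDiffOn ℝ 2 H J) (q : ℝ × ℝ) (hq : q ∈ Ω) :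
      HasDerivAt H (deriv H (sVal q.1 q.2)) (sVal q.1 q.2) :=
    ((hH.differentiableOn two_ne_zero).differentiableAt
      (hJopen.mem_nhds (mem q hq).1)).hasDerivAt
  have hsVal (q : ℝ × ℝ) (hq : q ∈ Ω) : DifferentiableAt ℝ (uncurry sVal) q :=
    (hsC1.differentiableOn one_ne_zero).differentiableAt (hΩopen.mem_nhds hq)
  have characteristic (q : ℝ × ℝ) (hq : q ∈ Ω) :
      burger (fun u v => F (sVal u v) + u * G (sVal u v)) sVal q.1 q.2 = 0 :=
    burger_eq_zero_of_eventually_level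
      (by filter_upwards [hΩopen.mem_nhds hq] with r hr using (mem r hr).2)
      (hsVal q hq) (diff hF q hq).differentiableAt (diff hG q hq).differentiableAt
      (diff hσ q hq).differentiableAt
  rintro p hp
  calc _ = burger _ (fun u v => G (sVal u v)) p.1 p.2 := by
        refine burger_congr ?_
        filter_upwards [hΩopen.mem_nhds hp] with q hq
        change burger _ _ q.1 q.2 = G (sVal q.1 q.2)
        rw [burger_comp_add_mul_comp (diff hF q hq) (diff hG q hq) (hsVal q hq),
          characteristic q hq]
        ring
    _ = 0 := by rw [burger_comp (diff hG p hp) (hsVal p hp), characteristic p hp, mul_zero]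

/-- The function `φ` defined by an intrinsic graphical strip satisfies the double
Burger equation `B_φ(B_φ(φ)) = 0`; in particular every strict intrinsic graphical
strip is a minimal surface. -/
theorem stmt_9 (J : Set ℝ) (hJopen : IsOpen J) (hJ : J.OrdConnected)
    (F G σ : ℝ → ℝ)
    (hF : ContDiffOn ℝ 2 F J) (hG : ContDiffOn ℝ 2 G J) (hσ : ContDiffOn ℝ 2 σ J)
    (hstrict : ∀ s ∈ J, (deriv F s) ^ 2 < 2 * deriv σ s * deriv G s)
    (Ψ : ℝ × ℝ → ℝ × ℝ)
    (hΨ : ∀ p : ℝ × ℝ, Ψ p = (p.1, G p.2 * p.1 ^ 2 / 2 + F p.2 * p.1 + σ p.2))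
    (hinj : Set.InjOn Ψ (Set.univ ×ˢ J))
    (Ω : Set (ℝ × ℝ)) (hΩ : Ω = Ψ '' (Set.univ ×ˢ J)) (hΩopen : IsOpen Ω)
    (sVal : ℝ → ℝ → ℝ)
    (hinv : ∀ u : ℝ, ∀ s ∈ J, sVal u (G s * u ^ 2 / 2 + F s * u + σ s) = s)
    (hsC1 : ContDiffOn ℝ 1 (fun p : ℝ × ℝ => sVal p.1 p.2) Ω)
    (φ : ℝ → ℝ → ℝ)
    (hφ : ∀ u v : ℝ, φ u v = F (sVal u v) + u * G (sVal u v)) :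
    ∀ p ∈ Ω, burger φ (burger φ φ) p.1 p.2 = 0 :=
  stmt_9_general J hJopen F G σ hF hG hσ Ψ hΨ Ω hΩ hΩopen sVal hinv hsC1 φ hφ
end

section
/- Let S ⊂ ℍ¹ be parametrized by 𝓛(r,s) = (γ(s) + r(γ'(s))^⊥, h₀(s) − (r/2)γ(s)·γ'(s)) with γ unit-speed. Then S has a characteristic point at parameter (r,s) (i.e. the tangent plane equals the horizontal plane) exactly when W₀(s) − r + (r²/2)κ(s) = 0, where W₀(s) = h₀'(s) + γ'(s)·γ(s)^⊥/2 and κ(s) = γ''(s)·(γ'(s))^⊥; hence S is noncharacteristic along the full line {s = s₀} if and only if 1 − 2W₀(s₀)κ(s₀) < 0. -/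
/-!
A tangent vector `a X₁ + b X₂ + c T` is horizontal iff `c = 0`, and the `T`-coefficient of
`∂_s𝓛` is `v₃ - (v₂ p₁ - v₁ p₂)/2` for `v = ∂_s𝓛`, `p = 𝓛`. Differentiating the ruled
parametrization, the unit-speed condition `|γ'|² = 1` produces the term `-r`, leaving the
quadratic `(κ/2) r² - r + W₀`, which has no real root iff its discriminant `1 - 2W₀κ` is negative.
-/

lemma exists_quadratic_root_of_discrim_nonneg {W κ : ℝ} (h : 0 ≤ 1 - 2 * W * κ) :
    ∃ r : ℝ, W - r + r ^ 2 / 2 * κ = 0 := by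
  rcases eq_or_ne κ 0 with rfl | hκ
  · exact ⟨W, by ring⟩
  obtain ⟨r, hr⟩ := exists_quadratic_eq_zero (a := κ / 2) (b := -1) (c := W) (by positivity)
    ⟨√(1 - 2 * W * κ), by rw [discrim, Real.mul_self_sqrt h]; ring⟩
  exact ⟨r, by linear_combination hr⟩

lemma forall_quadratic_ne_zero_iff (W κ : ℝ) :
    (∀ r : ℝ, W - r + r ^ 2 / 2 * κ ≠ 0) ↔ 1 - 2 * W * κ < 0 := by
  refine ⟨fun h => ?_, fun h r hr => ?_⟩
  · by_contra! hD
    obtain ⟨r, hr⟩ := exists_quadratic_root_of_discrim_nonneg hD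
    exact h r hr
  · refine quadratic_ne_zero_of_discrim_ne_sq (a := κ / 2) (b := -1) (c := W)
      (fun t ht => ?_) r (by linear_combination hr)
    rw [discrim] at ht
    nlinarith [sq_nonneg t]

section RuledSurface

variable (γ : ℝ → ℝ × ℝ) (h₀ : ℝ → ℝ) (r : ℝ)

/-- The curve `s ↦ 𝓛(r, s)` of the ruled parametrization. -/
noncomputable def ruledCurve (z : ℝ) : ℝ × ℝ × ℝ :=
  ((γ z).1 + r * (deriv γ z).2, (γ z).2 - r * (deriv γ z).1,
    h₀ z - r / 2 * ((γ z).1 * (deriv γ z).1 + (γ z).2 * (deriv γ z).2))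

variable {γ h₀} {s : ℝ}

lemma hasDerivAt_ruledCurve (hγ : DifferentiableAt ℝ γ s)
    (hγ' : DifferentiableAt ℝ (deriv γ) s) (hh₀ : DifferentiableAt ℝ h₀ s) :
    HasDerivAt (ruledCurve γ h₀ r)
      ((deriv γ s).1 + r * (deriv (deriv γ) s).2,
        (deriv γ s).2 - r * (deriv (deriv γ) s).1,
        deriv h₀ s - r / 2 *
          ((deriv γ s).1 * (deriv γ s).1 + (γ s).1 * (deriv (deriv γ) s).1 +
            ((deriv γ s).2 * (deriv γ s).2 + (γ s).2 * (deriv (deriv γ) s).2))) s := by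
  have Hγ₁ : HasDerivAt (fun z => (γ z).1) (deriv γ s).1 s := hγ.hasDerivAt.fst
  have Hγ₂ : HasDerivAt (fun z => (γ z).2) (deriv γ s).2 s := hγ.hasDerivAt.snd
  have Hγ'₁ : HasDerivAt (fun z => (deriv γ z).1) (deriv (deriv γ) s).1 s := hγ'.hasDerivAt.fst
  have Hγ'₂ : HasDerivAt (fun z => (deriv γ z).2) (deriv (deriv γ) s).2 s := hγ'.hasDerivAt.snd
  exact (Hγ₁.add (Hγ'₂.const_mul r)).prodMk ((Hγ₂.sub (Hγ'₁.const_mul r)).prodMk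
    (hh₀.hasDerivAt.sub (((Hγ₁.mul Hγ'₁).add (Hγ₂.mul Hγ'₂)).const_mul (r / 2))))

lemma ruledCurve_deriv_T_coeff (hγ : DifferentiableAt ℝ γ s)
    (hγ' : DifferentiableAt ℝ (deriv γ) s) (hh₀ : DifferentiableAt ℝ h₀ s)
    (hunit : (deriv γ s).1 ^ 2 + (deriv γ s).2 ^ 2 = 1) :
    (deriv (ruledCurve γ h₀ r) s).2.2 -
        ((deriv (ruledCurve γ h₀ r) s).2.1 * (ruledCurve γ h₀ r s).1 -
          (deriv (ruledCurve γ h₀ r) s).1 * (ruledCurve γ h₀ r s).2.1) / 2 =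
      (deriv h₀ s + ((deriv γ s).1 * (γ s).2 - (deriv γ s).2 * (γ s).1) / 2) - r +
        r ^ 2 / 2 * ((deriv (deriv γ) s).1 * (deriv γ s).2 -
          (deriv (deriv γ) s).2 * (deriv γ s).1) := by
  rw [(hasDerivAt_ruledCurve r hγ hγ' hh₀).deriv, ruledCurve]
  linear_combination (-r) * hunit

end RuledSurface

theorem stmt_18_general (J : Set ℝ)
    (γ : ℝ → ℝ × ℝ) (hγ : ContDiff ℝ 3 γ)
    (hunit : ∀ s ∈ J, (deriv γ s).1 ^ 2 + (deriv γ s).2 ^ 2 = 1)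
    (h₀ : ℝ → ℝ) (hh₀ : ContDiff ℝ 2 h₀)
    (W₀ κ : ℝ → ℝ)
    (hW₀ : ∀ s, W₀ s = deriv h₀ s +
      ((deriv γ s).1 * (γ s).2 - (deriv γ s).2 * (γ s).1) / 2)
    (hκ : ∀ s, κ s = (deriv (deriv γ) s).1 * (deriv γ s).2 -
      (deriv (deriv γ) s).2 * (deriv γ s).1)
    (L : ℝ → ℝ → ℝ × ℝ × ℝ)
    (hL : ∀ r s, L r s = ((γ s).1 + r * (deriv γ s).2, (γ s).2 - r * (deriv γ s).1,
      h₀ s - r / 2 * ((γ s).1 * (deriv γ s).1 + (γ s).2 * (deriv γ s).2))) :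
    ∀ s ∈ J, ∀ r : ℝ,
      ((deriv (fun z => L r z) s).2.2 -
          ((deriv (fun z => L r z) s).2.1 * (L r s).1 -
            (deriv (fun z => L r z) s).1 * (L r s).2.1) / 2 =
        W₀ s - r + r ^ 2 / 2 * κ s) ∧
      ((∀ r' : ℝ, W₀ s - r' + r' ^ 2 / 2 * κ s ≠ 0) ↔ 1 - 2 * W₀ s * κ s < 0) := by
  obtain rfl : L = fun r => ruledCurve γ h₀ r := funext₂ hL
  intro s hs r
  have hγ' : Differentiable ℝ (deriv γ) := (hγ.deriv' (n := 2)).differentiable (by norm_num)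
  refine ⟨?_, forall_quadratic_ne_zero_iff _ _⟩
  rw [hW₀, hκ]
  exact ruledCurve_deriv_T_coeff r (hγ.differentiable (by norm_num) s) (hγ' s)
    (hh₀.differentiable (by norm_num) s) (hunit s hs)

/-- For the ruled parametrization `𝓛(r,s) = (γ(s) + r(γ'(s))^⊥, h₀(s) − (r/2)γ(s)·γ'(s))`
of a surface `S ⊂ ℍ¹` (with `γ` unit speed and `(a,b)^⊥ = (b,−a)`), the coefficient
along `T` of the tangent vector `∂_s𝓛` in the frame `{X₁, X₂, T}` equals
`W₀(s) − r + (r²/2)κ(s)`; so `(r,s)` is characteristic exactly when this vanishes,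
and `S` is noncharacteristic along the full line `{s = s₀}` iff `1 − 2W₀(s₀)κ(s₀) < 0`. -/
theorem stmt_18 (J : Set ℝ) (hJopen : IsOpen J) (hJ : J.OrdConnected)
    (γ : ℝ → ℝ × ℝ) (hγ : ContDiff ℝ 3 γ)
    (hunit : ∀ s ∈ J, (deriv γ s).1 ^ 2 + (deriv γ s).2 ^ 2 = 1)
    (h₀ : ℝ → ℝ) (hh₀ : ContDiff ℝ 2 h₀)
    (W₀ κ : ℝ → ℝ)
    (hW₀ : ∀ s, W₀ s = deriv h₀ s +
      ((deriv γ s).1 * (γ s).2 - (deriv γ s).2 * (γ s).1) / 2)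
    (hκ : ∀ s, κ s = (deriv (deriv γ) s).1 * (deriv γ s).2 -
      (deriv (deriv γ) s).2 * (deriv γ s).1)
    (L : ℝ → ℝ → ℝ × ℝ × ℝ)
    (hL : ∀ r s, L r s = ((γ s).1 + r * (deriv γ s).2, (γ s).2 - r * (deriv γ s).1,
      h₀ s - r / 2 * ((γ s).1 * (deriv γ s).1 + (γ s).2 * (deriv γ s).2))) :
    ∀ s ∈ J, ∀ r : ℝ,
      ((deriv (fun z => L r z) s).2.2 -
          ((deriv (fun z => L r z) s).2.1 * (L r s).1 -
            (deriv (fun z => L r z) s).1 * (L r s).2.1) / 2 =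
        W₀ s - r + r ^ 2 / 2 * κ s) ∧
      ((∀ r' : ℝ, W₀ s - r' + r' ^ 2 / 2 * κ s ≠ 0) ↔ 1 - 2 * W₀ s * κ s < 0) :=
  stmt_18_general J γ hγ hunit h₀ hh₀ W₀ κ hW₀ hκ L hL
end

section
/- Let g : D ⊂ ℝ² → ℝ be C², set p = g_x + y/2, q = g_y − x/2, W = (p²+q²)^{1/2} with W ≠ 0 on D, and suppose (p/W)_x + (q/W)_y = 0 on D (minimal surface equation). If c(s) is an integral curve of the vector field (q/W)∂_x − (p/W)∂_y through z ∈ D, then (q/W, −p/W) is constant along c and c is a straight line segment; moreover g(c(s)) = g(z) + s(bx − ay)/2 where c(s) = (x + as, y + bs), so the lifted curve (c(s), g(c(s))) is a straight line in ℝ³. -/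
/-- Partial derivative in the first variable. -/
noncomputable def pdx (f : ℝ → ℝ → ℝ) (x y : ℝ) : ℝ := deriv (fun x' => f x' y) x

/-- Partial derivative in the second variable. -/
noncomputable def pdy (f : ℝ → ℝ → ℝ) (x y : ℝ) : ℝ := deriv (fun y' => f x y') y

/-!
Write `(u, v) = (P, Q) / W`. Differentiating `u² + v² = 1` gives `u du + v dv = 0` in every
direction, and together with `∂ₓu + ∂ᵧv = 0` this makes the derivatives of `u` and `v` along
`(v, -u)` vanish. So `(u, v)` is constant along every integral curve of `(v, -u)`, which therefore
has constant velocity `(a, b)` and is a line. The velocity is orthogonal to the horizontal gradient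
`(P, Q) = ∇g + (y, -x) / 2`, hence `d/ds g(c s) = (b x - a y) / 2` at `c s = (x, y)`, and this is
constant on the line.
-/

open Filter Topology

theorem Set.OrdConnected.eq_add_smul_of_hasDerivAt {E : Type*} [NormedAddCommGroup E]
    [NormedSpace ℝ E] {I : Set ℝ} (hI : I.OrdConnected) {f : ℝ → E} {v : E}
    (hf : ∀ t ∈ I, HasDerivAt f v t) {a b : ℝ} (ha : a ∈ I) (hb : b ∈ I) :
    f b = f a + (b - a) • v := by
  have hderiv : ∀ t ∈ I, HasDerivWithinAt (fun t => f t - t • v) 0 I t := fun t ht => by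
    have := (hf t ht).sub ((hasDerivAt_id' t).smul_const v)
    rw [one_smul, sub_self] at this
    exact this.hasDerivWithinAt
  have := hI.convex.norm_image_sub_le_of_norm_hasDerivWithin_le hderiv (C := 0)
    (fun _ _ => norm_zero.le) ha hb
  rw [zero_mul, norm_le_zero_iff, sub_eq_zero] at this
  rw [sub_smul]
  linear_combination (norm := module) this

theorem Set.OrdConnected.apply_eq_along_integralCurve_of_fderiv_apply_eq_zero {E F : Type*}
    [NormedAddCommGroup E] [NormedSpace ℝ E] [NormedAddCommGroup F] [NormedSpace ℝ F]
    {I : Set ℝ} (hI : I.OrdConnected) {D : Set E} {V : E → E} {f : E → F} {c : ℝ → E}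
    (hf : ∀ w ∈ D, DifferentiableAt ℝ f w) (hfV : ∀ w ∈ D, fderiv ℝ f w (V w) = 0)
    (hcD : ∀ s ∈ I, c s ∈ D) (hc : ∀ s ∈ I, HasDerivAt c (V (c s)) s) {a b : ℝ}
    (ha : a ∈ I) (hb : b ∈ I) : f (c b) = f (c a) := by
  have := hI.eq_add_smul_of_hasDerivAt (f := f ∘ c) (v := 0) (fun s hs => by
    simpa only [hfV _ (hcD s hs)] using
      (hf _ (hcD s hs)).hasFDerivAt.comp_hasDerivAt s (hc s hs)) ha hb
  simpa using this

theorem pdx_eq_fderiv {f : ℝ → ℝ → ℝ} {w : ℝ × ℝ}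
    (hf : DifferentiableAt ℝ (fun p : ℝ × ℝ => f p.1 p.2) w) :
    pdx f w.1 w.2 = fderiv ℝ (fun p : ℝ × ℝ => f p.1 p.2) w (1, 0) := by
  rw [pdx]
  exact (hf.hasFDerivAt.comp_hasDerivAt w.1
    ((hasDerivAt_id w.1).prodMk (hasDerivAt_const w.1 w.2))).deriv

theorem pdy_eq_fderiv {f : ℝ → ℝ → ℝ} {w : ℝ × ℝ}
    (hf : DifferentiableAt ℝ (fun p : ℝ × ℝ => f p.1 p.2) w) :
    pdy f w.1 w.2 = fderiv ℝ (fun p : ℝ × ℝ => f p.1 p.2) w (0, 1) := by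
  rw [pdy]
  exact (hf.hasFDerivAt.comp_hasDerivAt w.2
    ((hasDerivAt_const w.2 w.1).prodMk (hasDerivAt_id w.2))).deriv

theorem contDiffOn_pdx {D : Set (ℝ × ℝ)} (hD : IsOpen D) {f : ℝ → ℝ → ℝ} {m n : WithTop ℕ∞}
    (hf : ContDiffOn ℝ n (fun p : ℝ × ℝ => f p.1 p.2) D) (hmn : m + 1 ≤ n) :
    ContDiffOn ℝ m (fun p : ℝ × ℝ => pdx f p.1 p.2) D := by
  refine (((ContinuousLinearMap.apply ℝ ℝ ((1 : ℝ), (0 : ℝ))).contDiff.comp_contDiffOn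
    (hf.fderiv_of_isOpen hD hmn)).congr fun w hw => pdx_eq_fderiv ?_)
  exact (hf.differentiableOn (by rintro rfl; simp at hmn) w hw).differentiableAt (hD.mem_nhds hw)

theorem contDiffOn_pdy {D : Set (ℝ × ℝ)} (hD : IsOpen D) {f : ℝ → ℝ → ℝ} {m n : WithTop ℕ∞}
    (hf : ContDiffOn ℝ n (fun p : ℝ × ℝ => f p.1 p.2) D) (hmn : m + 1 ≤ n) :
    ContDiffOn ℝ m (fun p : ℝ × ℝ => pdy f p.1 p.2) D := by
  refine (((ContinuousLinearMap.apply ℝ ℝ ((0 : ℝ), (1 : ℝ))).contDiff.comp_contDiffOn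
    (hf.fderiv_of_isOpen hD hmn)).congr fun w hw => pdy_eq_fderiv ?_)
  exact (hf.differentiableOn (by rintro rfl; simp at hmn) w hw).differentiableAt (hD.mem_nhds hw)

theorem ContinuousLinearMap.apply_eq_fst_mul_add_snd_mul (L : ℝ × ℝ →L[ℝ] ℝ) (a : ℝ × ℝ) :
    L a = a.1 * L (1, 0) + a.2 * L (0, 1) := by
  have ha : a = a.1 • ((1 : ℝ), (0 : ℝ)) + a.2 • ((0 : ℝ), (1 : ℝ)) := by ext <;> simp
  conv_lhs => rw [ha, map_add, map_smul, map_smul]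
  rfl

theorem fderiv_apply_eq_pdx_add_pdy {f : ℝ → ℝ → ℝ} {w : ℝ × ℝ}
    (hf : DifferentiableAt ℝ (fun p : ℝ × ℝ => f p.1 p.2) w) (a : ℝ × ℝ) :
    fderiv ℝ (fun p : ℝ × ℝ => f p.1 p.2) w a = a.1 * pdx f w.1 w.2 + a.2 * pdy f w.1 w.2 := by
  rw [pdx_eq_fderiv hf, pdy_eq_fderiv hf, ContinuousLinearMap.apply_eq_fst_mul_add_snd_mul]

theorem fderiv_apply_perp_eq_zero_of_unit_of_div_eq_zero {u v : ℝ × ℝ → ℝ} {w : ℝ × ℝ}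
    (hu : DifferentiableAt ℝ u w) (hv : DifferentiableAt ℝ v w)
    (hunit : ∀ᶠ w' in 𝓝 w, u w' ^ 2 + v w' ^ 2 = 1)
    (hdiv : fderiv ℝ u w (1, 0) + fderiv ℝ v w (0, 1) = 0) :
    fderiv ℝ u w (v w, -u w) = 0 ∧ fderiv ℝ v w (v w, -u w) = 0 := by
  have horth : ∀ e, u w * fderiv ℝ u w e + v w * fderiv ℝ v w e = 0 := fun e => by
    have hconst : HasFDerivAt (fun w' => u w' ^ 2 + v w' ^ 2) (0 : ℝ × ℝ →L[ℝ] ℝ) w :=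
      (hasFDerivAt_const 1 w).congr_of_eventuallyEq hunit
    have := congrArg (· e) (((hu.hasFDerivAt.pow 2).add (hv.hasFDerivAt.pow 2)).unique hconst)
    simp only [add_apply, smul_apply, zero_apply, smul_eq_mul, nsmul_eq_mul] at this
    linear_combination this / 2
  have h10 := horth (1, 0)
  have h01 := horth (0, 1)
  simp only [ContinuousLinearMap.apply_eq_fst_mul_add_snd_mul _ (v w, -u w)]
  constructor
  · linear_combination v w * hdiv - h01
  · linear_combination h10 - u w * hdiv

theorem Set.OrdConnected.integralCurve_perp_eq_line_of_unit_of_div_eq_zero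
    {D : Set (ℝ × ℝ)} (hD : IsOpen D) {u v : ℝ × ℝ → ℝ}
    (hu : ∀ w ∈ D, DifferentiableAt ℝ u w) (hv : ∀ w ∈ D, DifferentiableAt ℝ v w)
    (hunit : ∀ w ∈ D, u w ^ 2 + v w ^ 2 = 1)
    (hdiv : ∀ w ∈ D, fderiv ℝ u w (1, 0) + fderiv ℝ v w (0, 1) = 0)
    {I : Set ℝ} (hI : I.OrdConnected) {c : ℝ → ℝ × ℝ} (hcD : ∀ s ∈ I, c s ∈ D)
    (hc : ∀ s ∈ I, HasDerivAt c (v (c s), -u (c s)) s) (h0 : 0 ∈ I) {s : ℝ} (hs : s ∈ I) :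
    u (c s) = u (c 0) ∧ v (c s) = v (c 0) ∧ c s = c 0 + s • (v (c 0), -u (c 0)) := by
  have hperp : ∀ w ∈ D, fderiv ℝ u w (v w, -u w) = 0 ∧ fderiv ℝ v w (v w, -u w) = 0 :=
    fun w hw => fderiv_apply_perp_eq_zero_of_unit_of_div_eq_zero (hu w hw) (hv w hw)
      (eventually_of_mem (hD.mem_nhds hw) hunit) (hdiv w hw)
  have hu_const : ∀ t ∈ I, u (c t) = u (c 0) := fun t ht =>
    hI.apply_eq_along_integralCurve_of_fderiv_apply_eq_zero hu (fun w hw => (hperp w hw).1)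
      hcD hc h0 ht
  have hv_const : ∀ t ∈ I, v (c t) = v (c 0) := fun t ht =>
    hI.apply_eq_along_integralCurve_of_fderiv_apply_eq_zero hv (fun w hw => (hperp w hw).2)
      hcD hc h0 ht
  refine ⟨hu_const s hs, hv_const s hs, ?_⟩
  rw [hI.eq_add_smul_of_hasDerivAt (f := c) (fun t ht => ?_) h0 hs, sub_zero]
  rw [← hu_const t ht, ← hv_const t ht]
  exact hc t ht

theorem Set.OrdConnected.apply_add_smul_of_orthogonal_horizontalGradient {g : ℝ → ℝ → ℝ}
    {I : Set ℝ} (hI : I.OrdConnected) {z a : ℝ × ℝ}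
    (hg : ∀ t ∈ I, DifferentiableAt ℝ (fun p : ℝ × ℝ => g p.1 p.2) (z + t • a))
    (horth : ∀ t ∈ I, a.1 * (pdx g (z + t • a).1 (z + t • a).2 + (z + t • a).2 / 2) +
      a.2 * (pdy g (z + t • a).1 (z + t • a).2 - (z + t • a).1 / 2) = 0)
    (h0 : 0 ∈ I) {s : ℝ} (hs : s ∈ I) :
    g (z + s • a).1 (z + s • a).2 = g z.1 z.2 + s * (a.2 * z.1 - a.1 * z.2) / 2 := by
  have hderiv : ∀ t ∈ I, HasDerivAt (fun t => g (z + t • a).1 (z + t • a).2)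
      ((a.2 * z.1 - a.1 * z.2) / 2) t := fun t ht => by
    have hline : HasDerivAt (fun t : ℝ => z + t • a) a t := by
      simpa using (hasDerivAt_const_add_iff z).2 ((hasDerivAt_id' t).smul_const a)
    have := (hg t ht).hasFDerivAt.comp_hasDerivAt t hline
    rw [fderiv_apply_eq_pdx_add_pdy (hg t ht)] at this
    refine this.congr_deriv ?_
    have := horth t ht
    simp only [Prod.fst_add, Prod.snd_add, Prod.smul_fst, Prod.smul_snd, smul_eq_mul] at this ⊢
    linear_combination this
  have := hI.eq_add_smul_of_hasDerivAt hderiv h0 hs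
  simp only [zero_smul, add_zero, sub_zero, smul_eq_mul] at this
  rw [this]
  ring

theorem div_sqrt_sq_add_div_sqrt_sq {p q : ℝ} (h : √(p ^ 2 + q ^ 2) ≠ 0) :
    (p / √(p ^ 2 + q ^ 2)) ^ 2 + (q / √(p ^ 2 + q ^ 2)) ^ 2 = 1 := by
  rw [div_pow, div_pow, ← add_div, div_eq_one_iff_eq (pow_ne_zero 2 h),
    Real.sq_sqrt (by positivity)]

theorem differentiableAt_div_sqrt_of_horizontalGradient {D : Set (ℝ × ℝ)} (hD : IsOpen D)
    {g : ℝ → ℝ → ℝ} (hg : ContDiffOn ℝ 2 (fun w : ℝ × ℝ => g w.1 w.2) D) {P Q W : ℝ → ℝ → ℝ}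
    (hP : ∀ x y, P x y = pdx g x y + y / 2) (hQ : ∀ x y, Q x y = pdy g x y - x / 2)
    (hW : ∀ x y, W x y = Real.sqrt (P x y ^ 2 + Q x y ^ 2)) (hWne : ∀ w ∈ D, W w.1 w.2 ≠ 0)
    {w : ℝ × ℝ} (hw : w ∈ D) :
    DifferentiableAt ℝ (fun w : ℝ × ℝ => P w.1 w.2 / W w.1 w.2) w ∧
      DifferentiableAt ℝ (fun w : ℝ × ℝ => Q w.1 w.2 / W w.1 w.2) w := by
  have hPc : ContDiffOn ℝ 1 (fun w : ℝ × ℝ => P w.1 w.2) D :=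
    ((contDiffOn_pdx hD hg (by norm_num)).add (contDiffOn_snd.div_const 2)).congr
      fun w _ => hP w.1 w.2
  have hQc : ContDiffOn ℝ 1 (fun w : ℝ × ℝ => Q w.1 w.2) D :=
    ((contDiffOn_pdy hD hg (by norm_num)).sub (contDiffOn_fst.div_const 2)).congr
      fun w _ => hQ w.1 w.2
  have hPQ : ∀ w ∈ D, P w.1 w.2 ^ 2 + Q w.1 w.2 ^ 2 ≠ 0 := fun w hw h =>
    hWne w hw (by rw [hW, h, Real.sqrt_zero])
  have hWc : ContDiffOn ℝ 1 (fun w : ℝ × ℝ => W w.1 w.2) D :=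
    (((hPc.pow 2).add (hQc.pow 2)).sqrt hPQ).congr fun w _ => hW w.1 w.2
  exact ⟨((hPc.div hWc hWne).differentiableOn one_ne_zero w hw).differentiableAt
      (hD.mem_nhds hw),
    ((hQc.div hWc hWne).differentiableOn one_ne_zero w hw).differentiableAt (hD.mem_nhds hw)⟩

theorem stmt_19_general (D : Set (ℝ × ℝ)) (hD : IsOpen D) (g : ℝ → ℝ → ℝ)
    (hg : ContDiffOn ℝ 2 (fun z : ℝ × ℝ => g z.1 z.2) D)
    (P Q W : ℝ → ℝ → ℝ)
    (hP : ∀ x y, P x y = pdx g x y + y / 2)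
    (hQ : ∀ x y, Q x y = pdy g x y - x / 2)
    (hW : ∀ x y, W x y = Real.sqrt (P x y ^ 2 + Q x y ^ 2))
    (hWne : ∀ z ∈ D, W z.1 z.2 ≠ 0)
    (hmin : ∀ z ∈ D,
      pdx (fun x y => P x y / W x y) z.1 z.2 +
        pdy (fun x y => Q x y / W x y) z.1 z.2 = 0)
    (I : Set ℝ) (hI : I.OrdConnected) (h0I : (0 : ℝ) ∈ I)
    (z : ℝ × ℝ)
    (c : ℝ → ℝ × ℝ) (hc0 : c 0 = z) (hcD : ∀ s ∈ I, c s ∈ D)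
    (hc : ∀ s ∈ I, HasDerivAt c
      (Q (c s).1 (c s).2 / W (c s).1 (c s).2,
        -(P (c s).1 (c s).2 / W (c s).1 (c s).2)) s) :
    ∀ s ∈ I,
      (Q (c s).1 (c s).2 / W (c s).1 (c s).2 = Q z.1 z.2 / W z.1 z.2 ∧
        P (c s).1 (c s).2 / W (c s).1 (c s).2 = P z.1 z.2 / W z.1 z.2) ∧
      c s = (z.1 + s * (Q z.1 z.2 / W z.1 z.2), z.2 - s * (P z.1 z.2 / W z.1 z.2)) ∧
      g (c s).1 (c s).2 = g z.1 z.2 +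
        s * ((-(P z.1 z.2 / W z.1 z.2)) * z.1 - (Q z.1 z.2 / W z.1 z.2) * z.2) / 2 := by
  set u : ℝ × ℝ → ℝ := fun w => P w.1 w.2 / W w.1 w.2
  set v : ℝ × ℝ → ℝ := fun w => Q w.1 w.2 / W w.1 w.2
  have huv := fun {w} (hw : w ∈ D) =>
    differentiableAt_div_sqrt_of_horizontalGradient hD hg hP hQ hW hWne hw
  have hunit : ∀ w ∈ D, u w ^ 2 + v w ^ 2 = 1 := fun w hw => by
    simpa only [u, v, hW] using div_sqrt_sq_add_div_sqrt_sq (hW w.1 w.2 ▸ hWne w hw)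
  have hdiv : ∀ w ∈ D, fderiv ℝ u w (1, 0) + fderiv ℝ v w (0, 1) = 0 := fun w hw => by
    have := hmin w hw
    rwa [pdx_eq_fderiv (f := fun x y => P x y / W x y) (huv hw).1,
      pdy_eq_fderiv (f := fun x y => Q x y / W x y) (huv hw).2] at this
  have hline := fun {s} (hs : s ∈ I) => hI.integralCurve_perp_eq_line_of_unit_of_div_eq_zero hD
    (fun w hw => (huv hw).1) (fun w hw => (huv hw).2) hunit hdiv hcD hc h0I hs
  simp only [hc0] at hline
  intro s hs
  obtain ⟨hus, hvs, hcs⟩ := hline hs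
  refine ⟨⟨hvs, hus⟩, by rw [hcs]; ext <;> simp [sub_eq_add_neg], ?_⟩
  rw [hcs]
  refine hI.apply_add_smul_of_orthogonal_horizontalGradient (fun t ht => ?_) (fun t ht => ?_)
    h0I hs
  · rw [← (hline ht).2.2]
    exact (hg.differentiableOn two_ne_zero _ (hcD t ht)).differentiableAt (hD.mem_nhds (hcD t ht))
  · obtain ⟨hut, hvt, hct⟩ := hline ht
    rw [← hct, ← hP, ← hQ, ← hut, ← hvt]
    ring

/-- Foliation lemma for minimal graphs over the `xy`-plane in `ℍ¹`: if `g` is `C²` on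
an open set `D`, `p = g_x + y/2`, `q = g_y − x/2`, `W = (p² + q²)^{1/2} ≠ 0`, and
`(p/W)_x + (q/W)_y = 0` on `D`, then along any integral curve `c` of
`(q/W)∂_x − (p/W)∂_y` through `z ∈ D` the field `(q/W, −p/W)` is constant,
`c` is a straight line segment `c(s) = z + s(a,b)` with `(a,b) = (q/W, −p/W)(z)`,
and `g(c(s)) = g(z) + s(bx − ay)/2`, so the lifted curve is a straight line in `ℝ³`. -/
theorem stmt_19 (D : Set (ℝ × ℝ)) (hD : IsOpen D) (g : ℝ → ℝ → ℝ)
    (hg : ContDiffOn ℝ 2 (fun z : ℝ × ℝ => g z.1 z.2) D)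
    (P Q W : ℝ → ℝ → ℝ)
    (hP : ∀ x y, P x y = pdx g x y + y / 2)
    (hQ : ∀ x y, Q x y = pdy g x y - x / 2)
    (hW : ∀ x y, W x y = Real.sqrt (P x y ^ 2 + Q x y ^ 2))
    (hWne : ∀ z ∈ D, W z.1 z.2 ≠ 0)
    (hmin : ∀ z ∈ D,
      pdx (fun x y => P x y / W x y) z.1 z.2 +
        pdy (fun x y => Q x y / W x y) z.1 z.2 = 0)
    (I : Set ℝ) (hI : I.OrdConnected) (h0I : (0 : ℝ) ∈ I)
    (z : ℝ × ℝ) (hz : z ∈ D)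
    (c : ℝ → ℝ × ℝ) (hc0 : c 0 = z) (hcD : ∀ s ∈ I, c s ∈ D)
    (hc : ∀ s ∈ I, HasDerivAt c
      (Q (c s).1 (c s).2 / W (c s).1 (c s).2,
        -(P (c s).1 (c s).2 / W (c s).1 (c s).2)) s) :
    ∀ s ∈ I,
      (Q (c s).1 (c s).2 / W (c s).1 (c s).2 = Q z.1 z.2 / W z.1 z.2 ∧
        P (c s).1 (c s).2 / W (c s).1 (c s).2 = P z.1 z.2 / W z.1 z.2) ∧
      c s = (z.1 + s * (Q z.1 z.2 / W z.1 z.2), z.2 - s * (P z.1 z.2 / W z.1 z.2)) ∧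
      g (c s).1 (c s).2 = g z.1 z.2 +
        s * ((-(P z.1 z.2 / W z.1 z.2)) * z.1 - (Q z.1 z.2 / W z.1 z.2) * z.2) / 2 :=
  stmt_19_general D hD g hg P Q W hP hQ hW hWne hmin I hI h0I z c hc0 hcD hc
end
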